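/- For a finite group G and functions f, h : G → M_t(ℂ), define ψ(a) = ‖(h*f)(a)‖²_HS. Then ψ admits a representation-theoretic factorization ψ(a) = ⟨H̃, φ(a)·F⟩ where φ is a unitary representation of G on a subspace of L²_t(G×G), F(x,y) = f(y)f(x)*, H̃(x,y) = h̃(y)h̃(x)*, and (φ(a)F)(x,y) = F(xa, ya). Consequently the Fourier algebra norm of ψ satisfies ‖ψ‖_A ≤ ‖f‖₂² · ‖h‖₂², where ‖f‖₂² = E_x[‖f(x)‖²_HS]. -/

import Mathlib

open scoped Kronecker ComplexOrder
open Finset Matrix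

attribute [local instance] Classical.propDecidable

noncomputable section

def hsNormSq {m n : Type*} [Fintype m] [Fintype n] (A : Matrix m n ℂ) : ℝ :=
  ∑ i, ∑ j, Complex.normSq (A i j)

def vnorm {n : ℕ} (u : Fin n → ℂ) : ℝ := Real.sqrt (∑ i, Complex.normSq (u i))

def opNorm {d : ℕ} (M : Matrix (Fin d) (Fin d) ℂ) : ℝ :=
  ‖Matrix.toEuclideanCLM (𝕜 := ℂ) M‖

def traceNorm {m : Type*} [Fintype m] [DecidableEq m] (A : Matrix m m ℂ) : ℝ :=
  ((Matrix.posSemidef_conjTranspose_mul_self A).1.eigenvectorUnitary.1 *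
    diagonal (((↑) : ℝ → ℂ) ∘ (√·) ∘ (Matrix.posSemidef_conjTranspose_mul_self A).1.eigenvalues) *
    (star (Matrix.posSemidef_conjTranspose_mul_self A).1.eigenvectorUnitary :
      Matrix m m ℂ)).trace.re

variable {G : Type*} [Group G] [Fintype G]

def conv {t : ℕ} (f g : G → Matrix (Fin t) (Fin t) ℂ) (x : G) : Matrix (Fin t) (Fin t) ℂ :=
  (Fintype.card G : ℂ)⁻¹ • ∑ y, f (x * y⁻¹) * g y

def adjFun {t : ℕ} (f : G → Matrix (Fin t) (Fin t) ℂ) (x : G) : Matrix (Fin t) (Fin t) ℂ :=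
  (f x⁻¹)ᴴ

def fourierMat {t d : ℕ} (f : G → Matrix (Fin t) (Fin t) ℂ)
    (ρ : G →* Matrix.unitaryGroup (Fin d) ℂ) : Matrix (Fin t × Fin d) (Fin t × Fin d) ℂ :=
  (Fintype.card G : ℂ)⁻¹ • ∑ x, (f x) ⊗ₖ (ρ x : Matrix (Fin d) (Fin d) ℂ)

def l2sq {t : ℕ} (f : G → Matrix (Fin t) (Fin t) ℂ) : ℝ :=
  (Fintype.card G : ℝ)⁻¹ * ∑ x, hsNormSq (f x)

def u2pow4 {t : ℕ} (f : G → Matrix (Fin t) (Fin t) ℂ) : ℝ := l2sq (conv (adjFun f) f)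

def IsIrred {d : ℕ} (ρ : G →* Matrix.unitaryGroup (Fin d) ℂ) : Prop :=
  ∀ M : Matrix (Fin d) (Fin d) ℂ,
    (∀ g, (ρ g : Matrix (Fin d) (Fin d) ℂ) * M = M * (ρ g : Matrix (Fin d) (Fin d) ℂ)) →
    ∃ c : ℂ, M = c • (1 : Matrix (Fin d) (Fin d) ℂ)

def IsNontrivialRep {d : ℕ} (ρ : G →* Matrix.unitaryGroup (Fin d) ℂ) : Prop :=
  ∃ g, (ρ g : Matrix (Fin d) (Fin d) ℂ) ≠ 1

def IsBiased (S : Finset G) (ε : ℝ) : Prop :=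
  S.Nonempty ∧ ∀ (d : ℕ) (ρ : G →* Matrix.unitaryGroup (Fin d) ℂ),
    IsIrred ρ → IsNontrivialRep ρ →
    opNorm ((S.card : ℂ)⁻¹ • ∑ s ∈ S, (ρ s : Matrix (Fin d) (Fin d) ℂ)) ≤ ε

def Tmat (f : G → ℂ) : Matrix G G ℂ := fun x y => f (x⁻¹ * y) / (Fintype.card G : ℂ)

/-!
After the substitution `y ↦ y a`, `‖(h * f)(a)‖²_HS` becomes a double average of
`Tr (F(x a, y a)ᴴ H̃(x, y))`, i.e. the `L²` pairing of `H̃` with the right translate of `F`.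
Right translation permutes the coordinates of `L²_t(G × G)`, so it is a unitary (permutation)
representation, and `‖F‖₂ ≤ ‖f‖₂²`, `‖H̃‖₂ ≤ ‖h‖₂²` by submultiplicativity of the
Hilbert–Schmidt norm.
-/

open scoped Matrix.Norms.Frobenius

section HilbertSchmidt

variable {l m n p : Type*} [Fintype l] [Fintype m] [Fintype n] [Fintype p]

lemma hsNormSq_eq_norm_sq (A : Matrix m n ℂ) : hsNormSq A = ‖A‖ ^ 2 := by
  rw [frobenius_norm_def, ← Real.sqrt_eq_rpow, Real.sq_sqrt (by positivity)]
  simp [hsNormSq, Complex.normSq_eq_norm_sq]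

lemma hsNormSq_nonneg (A : Matrix m n ℂ) : 0 ≤ hsNormSq A := by
  rw [hsNormSq_eq_norm_sq]
  positivity

lemma hsNormSq_conjTranspose (A : Matrix m n ℂ) : hsNormSq Aᴴ = hsNormSq A := by
  simp [hsNormSq_eq_norm_sq]

lemma hsNormSq_mul_le (A : Matrix m n ℂ) (B : Matrix n p ℂ) :
    hsNormSq (A * B) ≤ hsNormSq A * hsNormSq B := by
  simp only [hsNormSq_eq_norm_sq, ← mul_pow]
  gcongr
  exact frobenius_norm_mul A B

lemma trace_conjTranspose_mul (A B : Matrix m n ℂ) :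
    (Aᴴ * B).trace = ∑ i, ∑ j, star (A i j) * B i j := by
  rw [Finset.sum_comm]
  simp [Matrix.trace, Matrix.mul_apply]

lemma ofReal_hsNormSq (A : Matrix m n ℂ) : (hsNormSq A : ℂ) = (Aᴴ * A).trace := by
  simp [trace_conjTranspose_mul, hsNormSq, Complex.normSq_eq_conj_mul_self]

lemma trace_conjTranspose_mul_conjTranspose_mul (A : Matrix m n ℂ) (B : Matrix m p ℂ)
    (C : Matrix l n ℂ) (D : Matrix l p ℂ) :
    ((Bᴴ * A)ᴴ * (Dᴴ * C)).trace = ((A * Cᴴ)ᴴ * (B * Dᴴ)).trace := by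
  simp only [conjTranspose_mul, conjTranspose_conjTranspose, Matrix.mul_assoc]
  rw [trace_mul_comm, ← Matrix.mul_assoc C, trace_mul_comm (C * Aᴴ)]
  simp only [Matrix.mul_assoc]

end HilbertSchmidt

section Convolution

variable {G : Type*} [Group G] [Fintype G] {t : ℕ}

lemma conv_apply_eq_sum_adjFun (h f : G → Matrix (Fin t) (Fin t) ℂ) (a : G) :
    conv h f a = (Fintype.card G : ℂ)⁻¹ • ∑ x, (adjFun h x)ᴴ * f (x * a) := by
  rw [conv, ← Equiv.sum_comp (Equiv.mulRight a)]
  simp [adjFun]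

lemma l2sq_nonneg (g : G → Matrix (Fin t) (Fin t) ℂ) : 0 ≤ l2sq g :=
  mul_nonneg (by positivity) (sum_nonneg fun x _ => hsNormSq_nonneg (g x))

lemma l2sq_adjFun (h : G → Matrix (Fin t) (Fin t) ℂ) : l2sq (adjFun h) = l2sq h := by
  simp only [l2sq, adjFun, hsNormSq_conjTranspose]
  congr 1
  exact Fintype.sum_equiv (Equiv.inv G) _ _ fun _ => rfl

theorem ofReal_hsNormSq_conv (h f : G → Matrix (Fin t) (Fin t) ℂ) (a : G) :
    (hsNormSq (conv h f a) : ℂ) = ((Fintype.card G : ℂ)⁻¹) ^ 2 * ∑ x, ∑ y,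
      ((f (y * a) * (f (x * a))ᴴ)ᴴ * (adjFun h y * (adjFun h x)ᴴ)).trace := by
  rw [ofReal_hsNormSq, conv_apply_eq_sum_adjFun, conjTranspose_smul, conjTranspose_sum]
  simp only [smul_mul_smul, trace_smul, sum_mul, mul_sum, trace_sum, smul_eq_mul, star_inv₀,
    star_natCast]
  simp_rw [trace_conjTranspose_mul_conjTranspose_mul, sq]

end Convolution

section PermutationRepresentation

variable {ι R : Type*} [Fintype ι] [DecidableEq ι] [CommRing R] [StarRing R]

lemma permMatrix_mem_unitaryGroup (σ : Equiv.Perm ι) : σ.permMatrix R ∈ unitaryGroup ι R := by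
  rw [mem_unitaryGroup_iff', star_eq_conjTranspose, conjTranspose_permMatrix, ← permMatrix_mul,
    mul_inv_cancel, permMatrix_one]

def permUnitaryHom : Equiv.Perm ι →* unitaryGroup ι R :=
  (permMatrixHom (n := ι) (R := R)).codRestrict _ fun σ => permMatrix_mem_unitaryGroup σ⁻¹

lemma permUnitaryHom_mulVec (σ : Equiv.Perm ι) (v : ι → R) :
    ((permUnitaryHom σ : unitaryGroup ι R) : Matrix ι ι R) *ᵥ v = v ∘ ⇑σ⁻¹ :=
  permMatrix_mulVec σ⁻¹

end PermutationRepresentation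

section FinPermRep

variable {G α R : Type*} [Group G] [Fintype α] [CommRing R] [StarRing R]

def finPermRep (σ : G →* Equiv.Perm α) : G →* unitaryGroup (Fin (Fintype.card α)) R :=
  permUnitaryHom.comp ((Fintype.equivFin α).permCongrHom.toMonoidHom.comp σ)

lemma sum_star_mul_finPermRep_mulVec (σ : G →* Equiv.Perm α) (a : G) (W V : α → R) :
    ∑ k, star ((W ∘ (Fintype.equivFin α).symm) k) *
        (((finPermRep σ a : unitaryGroup _ R) : Matrix _ _ R) *ᵥ
          (V ∘ (Fintype.equivFin α).symm)) k =
      ∑ p, star (W p) * V ((σ a)⁻¹ p) := by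
  rw [← Equiv.sum_comp (Fintype.equivFin α).symm]
  simp [finPermRep, permUnitaryHom_mulVec, Equiv.permCongr_def]

end FinPermRep

section RightTranslation

variable (G : Type*) [Group G] (β : Type*)

/-- Through `permUnitaryHom`, which maps `σ` to `v ↦ v ∘ σ⁻¹`, the inverse here makes `a` act
on vectors by `F ↦ F(· a, · a)`. -/
def diagMulRightPerm : G →* Equiv.Perm ((G × G) × β) where
  toFun a := ((Equiv.mulRight a⁻¹).prodCongr (Equiv.mulRight a⁻¹)).prodCongr (Equiv.refl β)
  map_one' := by ext <;> simp
  map_mul' a b := by ext <;> simp [mul_assoc]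

lemma diagMulRightPerm_inv_apply (a x y : G) (b : β) :
    (diagMulRightPerm G β a)⁻¹ ((x, y), b) = ((x * a, y * a), b) := by
  simp [diagMulRightPerm]

end RightTranslation

section GramVector

variable {G : Type*} [Group G] [Fintype G] {t : ℕ}

/-- The factor `|G|⁻¹` turns the averaged inner product of `L²_t(G × G)` into the plain
ℓ² inner product. -/
def gramVec (g : G → Matrix (Fin t) (Fin t) ℂ) : (G × G) × (Fin t × Fin t) → ℂ :=
  fun p => (Fintype.card G : ℂ)⁻¹ * (g p.1.2 * (g p.1.1)ᴴ) p.2.1 p.2.2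

lemma sum_star_gramVec_mul_translate (H F : G → Matrix (Fin t) (Fin t) ℂ) (a : G) :
    ∑ p, star (gramVec H p) * gramVec F ((diagMulRightPerm G _ a)⁻¹ p) =
      star (((Fintype.card G : ℂ)⁻¹) ^ 2 * ∑ x, ∑ y,
        ((F (y * a) * (F (x * a))ᴴ)ᴴ * (H y * (H x)ᴴ)).trace) := by
  simp only [Fintype.sum_prod_type, diagMulRightPerm_inv_apply, gramVec, trace_conjTranspose_mul,
    star_mul, star_sum, mul_sum, star_star, star_pow, star_inv₀, star_natCast]
  congr! 4 with x y i j
  ring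

lemma sum_normSq_gramVec_le (g : G → Matrix (Fin t) (Fin t) ℂ) :
    ∑ p, Complex.normSq (gramVec g p) ≤ l2sq g ^ 2 := by
  calc ∑ p, Complex.normSq (gramVec g p)
      = ((Fintype.card G : ℝ)⁻¹) ^ 2 * ∑ x, ∑ y, hsNormSq (g y * (g x)ᴴ) := by
        simp [Fintype.sum_prod_type, gramVec, hsNormSq, mul_sum, sq]
    _ ≤ ((Fintype.card G : ℝ)⁻¹) ^ 2 * ∑ x, ∑ y, hsNormSq (g y) * hsNormSq (g x) := by
        gcongr with x _ y _
        simpa only [hsNormSq_conjTranspose] using hsNormSq_mul_le (g y) (g x)ᴴ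
    _ = l2sq g ^ 2 := by
        rw [l2sq, mul_pow, sq (∑ x, _), sum_mul_sum, sum_comm]

lemma vnorm_gramVec_le (g : G → Matrix (Fin t) (Fin t) ℂ) :
    vnorm (gramVec g ∘ (Fintype.equivFin _).symm) ≤ l2sq g := by
  rw [vnorm, Real.sqrt_le_iff]
  refine ⟨l2sq_nonneg g, ?_⟩
  rw [Function.comp_def,
    Equiv.sum_comp (Fintype.equivFin _).symm fun p => Complex.normSq (gramVec g p)]
  exact sum_normSq_gramVec_le g

end GramVector

theorem psi_factorization {G : Type*} [Group G] [Fintype G] {t : ℕ}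
    (f h : G → Matrix (Fin t) (Fin t) ℂ) :
    (∀ a : G, ((hsNormSq (conv h f a) : ℝ) : ℂ) =
      ((Fintype.card G : ℂ)⁻¹) ^ 2 * ∑ x, ∑ y,
        ((f (y * a) * (f (x * a))ᴴ)ᴴ * (adjFun h y * (adjFun h x)ᴴ)).trace) ∧
    ∃ (n : ℕ) (π : G →* Matrix.unitaryGroup (Fin n) ℂ) (u v : Fin n → ℂ),
      (∀ a, ((hsNormSq (conv h f a) : ℝ) : ℂ) =
        ∑ i, (starRingEnd ℂ) (u i) * ((π a : Matrix (Fin n) (Fin n) ℂ).mulVec v) i) ∧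
      vnorm u * vnorm v ≤ l2sq f * l2sq h := by
  let e := Fintype.equivFin ((G × G) × (Fin t × Fin t))
  refine ⟨ofReal_hsNormSq_conv h f, _, finPermRep (diagMulRightPerm G (Fin t × Fin t)),
    gramVec (adjFun h) ∘ e.symm, gramVec f ∘ e.symm, fun a => ?_, ?_⟩
  · rw [← Complex.conj_ofReal, ofReal_hsNormSq_conv]
    simp only [starRingEnd_apply]
    rw [sum_star_mul_finPermRep_mulVec, sum_star_gramVec_mul_translate]
  · rw [mul_comm (l2sq f), ← l2sq_adjFun h]
    exact mul_le_mul (vnorm_gramVec_le _) (vnorm_gramVec_le f) (Real.sqrt_nonneg _)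
      (l2sq_nonneg _)
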